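/- arXiv:1901.01252 — 2 statements merged into one kernel-verified Lean document; each statement's English description precedes it below -/
import Mathlib

section
/- The Heyting implication of subpresheaves of h_L admits the pointwise description (S → T)_P = { u : P → L : for all p ∈ P, u_p ∈ S_{↓p} implies u_p ∈ T_{↓p} }, provided S and T each have a b-index; moreover, if S and T have b-index n, then S → T has b-index n + 1. -/
/-- A finite rooted poset: a finite partial order with a greatest element (the root). -/
structure FRP : Type 1 where
  carrier : Type
  [po : PartialOrder carrier]
  [fin : Finite carrier]
  root : carrier
  le_root : ∀ x : carrier, x ≤ root

attribute [instance] FRP.po FRP.fin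

/-- The downset of a point, as a finite rooted poset. -/
def FRP.down (P : FRP) (p : P.carrier) : FRP where
  carrier := {x : P.carrier // x ≤ p}
  root := ⟨p, le_refl p⟩
  le_root := fun x => x.2

/-- An `L`-evaluation: a monotone map from a finite rooted poset into `L`. -/
structure Eval (L : Type) [PartialOrder L] : Type 1 where
  P : FRP
  map : P.carrier → L
  mono : Monotone map

variable {L : Type} [PartialOrder L]

/-- Restriction of an evaluation to the downset of a point. -/
def Eval.restrict (u : Eval L) (p : u.P.carrier) : Eval L where
  P := u.P.down p
  map := fun x => u.map x.1
  mono := fun _ _ h => u.mono h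

/-- The value of an evaluation at the root of its domain. -/
def Eval.rootVal (u : Eval L) : L := u.map u.P.root

/-- The relations `∼ₙ` on `L`-evaluations. -/
def sim (L : Type) [PartialOrder L] : ℕ → Eval L → Eval L → Prop
  | 0 => fun u v => u.rootVal = v.rootVal
  | n+1 => fun u v =>
      (∀ p, ∃ q, sim L n (u.restrict p) (v.restrict q)) ∧
      (∀ q, ∃ p, sim L n (v.restrict q) (u.restrict p))

/-- The relations `≤ₙ`: `lev L n v u` means `v ≤ₙ u`. -/
def lev (L : Type) [PartialOrder L] : ℕ → Eval L → Eval L → Prop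
  | 0 => fun v u => v.rootVal ≤ u.rootVal
  | n+1 => fun v u => ∀ q, ∃ p, sim L n (v.restrict q) (u.restrict p)

/-- `S` is a subpresheaf of `h_L`: closed under restriction. -/
def IsSub (L : Type) [PartialOrder L] (S : Set (Eval L)) : Prop :=
  ∀ u ∈ S, ∀ p, u.restrict p ∈ S

/-- `S` has b-index `n`: closed under `∼ₙ`. -/
def BIndex (L : Type) [PartialOrder L] (n : ℕ) (S : Set (Eval L)) : Prop :=
  ∀ u ∈ S, ∀ v, sim L n u v → v ∈ S

/-- `S` has b≤-index `n`: closed under being `≤ₙ`-below a member. -/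
def BleIndex (L : Type) [PartialOrder L] (n : ℕ) (S : Set (Eval L)) : Prop :=
  ∀ u ∈ S, ∀ v, lev L n v u → v ∈ S

/-- `↓ₙ u`. -/
def downSet (L : Type) [PartialOrder L] (n : ℕ) (u : Eval L) : Set (Eval L) :=
  {v | lev L n v u}

/-- Pointwise description of Heyting implication of subpresheaves. -/
def himpPt (L : Type) [PartialOrder L] (S T : Set (Eval L)) : Set (Eval L) :=
  {u | ∀ p, u.restrict p ∈ S → u.restrict p ∈ T}

/-- The embedding of downward closed subsets of `L` into subpresheaves. -/
def iota (L : Type) [PartialOrder L] (d : Set L) : Set (Eval L) :=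
  {u | u.rootVal ∈ d}

/-- Membership in the Heyting algebra `S(h_L)`: subpresheaves with a b-index. -/
def InS (L : Type) [PartialOrder L] (S : Set (Eval L)) : Prop :=
  IsSub L S ∧ ∃ n, BIndex L n S

/-- `ev_f`. -/
def evalMap (L : Type) [PartialOrder L] (f : Eval L) (X : Set (Eval L)) : Set f.P.carrier :=
  {p | f.restrict p ∈ X}

/-- Heyting implication of downward closed subsets of a poset. -/
def himpD {M : Type} [PartialOrder M] (a b : Set M) : Set M :=
  {p | ∀ q ≤ p, q ∈ a → q ∈ b}

/-- Composition of an evaluation with a monotone map into its domain. -/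
def Eval.comp {L : Type} [PartialOrder L] (u : Eval L) (Q : FRP)
    (h : Q.carrier → u.P.carrier) (hm : Monotone h) : Eval L :=
  ⟨Q, u.map ∘ h, u.mono.comp hm⟩

/-- The standard presheaf Heyting implication: quantify over all open maps into the domain. -/
def himpFull (L : Type) [PartialOrder L] (S T : Set (Eval L)) : Set (Eval L) :=
  {u | ∀ (Q : FRP) (h : Q.carrier → u.P.carrier) (hm : Monotone h),
    (∀ (q : Q.carrier) (y : u.P.carrier), y ≤ h q → ∃ q', q' ≤ q ∧ h q' = y) →
    (u.comp Q h hm ∈ S → u.comp Q h hm ∈ T)}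

lemma sim_symm {L : Type} [PartialOrder L] :
    ∀ (n : ℕ) (u v : Eval L), sim L n u v → sim L n v u
  | 0, _, _, h => h.symm
  | _+1, _, _, h => ⟨h.2, h.1⟩

lemma sim_trans {L : Type} [PartialOrder L] :
    ∀ (n : ℕ) (u v w : Eval L), sim L n u v → sim L n v w → sim L n u w
  | 0, _, _, _, h1, h2 => h1.trans h2
  | n+1, _, _, _, h1, h2 =>
    ⟨fun p => by
        obtain ⟨q, hq⟩ := h1.1 p
        obtain ⟨r, hr⟩ := h2.1 q
        exact ⟨r, sim_trans n _ _ _ hq hr⟩,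
     fun r => by
        obtain ⟨q, hq⟩ := h2.2 r
        obtain ⟨p, hp⟩ := h1.2 q
        exact ⟨p, sim_trans n _ _ _ hq hp⟩⟩

/-- Key lemma: two pullbacks of `u` along open maps with the same root image are
`∼ₙ`-equivalent for every `n`. -/
lemma comp_sim {L : Type} [PartialOrder L] :
    ∀ (n : ℕ) (u : Eval L) (Q R : FRP)
      (h : Q.carrier → u.P.carrier) (k : R.carrier → u.P.carrier)
      (hm : Monotone h) (km : Monotone k)
      (ho : ∀ (q : Q.carrier) (y : u.P.carrier), y ≤ h q → ∃ q', q' ≤ q ∧ h q' = y)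
      (ko : ∀ (r : R.carrier) (y : u.P.carrier), y ≤ k r → ∃ r', r' ≤ r ∧ k r' = y),
      h Q.root = k R.root → sim L n (u.comp Q h hm) (u.comp R k km)
  | 0, u, Q, R, h, k, _, _, _, _, e => by
      show u.map (h Q.root) = u.map (k R.root); rw [e]
  | n+1, u, Q, R, h, k, hm, km, ho, ko, e => by
      constructor
      · intro q
        obtain ⟨r, _, hkr⟩ := ko R.root (h q) (by rw [← e]; exact hm (Q.le_root q))
        refine ⟨r, ?_⟩
        exact comp_sim n u (Q.down q) (R.down r) (fun x => h x.1) (fun x => k x.1)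
          (fun _ _ hab => hm hab) (fun _ _ hab => km hab)
          (fun x y hy => by
            obtain ⟨q', hq', he⟩ := ho x.1 y hy
            exact ⟨⟨q', le_trans hq' x.2⟩, hq', he⟩)
          (fun x y hy => by
            obtain ⟨r', hr', he⟩ := ko x.1 y hy
            exact ⟨⟨r', le_trans hr' x.2⟩, hr', he⟩)
          hkr.symm
      · intro r
        obtain ⟨q, _, hhq⟩ := ho Q.root (k r) (by rw [e]; exact km (R.le_root r))
        refine ⟨q, ?_⟩
        exact comp_sim n u (R.down r) (Q.down q) (fun x => k x.1) (fun x => h x.1)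
          (fun _ _ hab => km hab) (fun _ _ hab => hm hab)
          (fun x y hy => by
            obtain ⟨r', hr', he⟩ := ko x.1 y hy
            exact ⟨⟨r', le_trans hr' x.2⟩, hr', he⟩)
          (fun x y hy => by
            obtain ⟨q', hq', he⟩ := ho x.1 y hy
            exact ⟨⟨q', le_trans hq' x.2⟩, hq', he⟩)
          hhq.symm

/-- The inclusion of a downset is an open map. -/
lemma val_open (P : FRP) (p : P.carrier) :
    ∀ (x : (P.down p).carrier) (y : P.carrier), y ≤ x.1 → ∃ x', x' ≤ x ∧ x'.1 = y :=
  fun x y hy => ⟨⟨y, le_trans hy x.2⟩, hy, rfl⟩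

/-- for subpresheaves with b-indexes, the Heyting implication admits the
pointwise description; and if `S, T` have b-index `n`, then `S → T` has b-index `n+1`. -/
theorem himp_pointwise_and_index (L : Type) [PartialOrder L] [Finite L]
    (S T : Set (Eval L)) (hS : IsSub L S) (hT : IsSub L T) :
    ((∃ m, BIndex L m S) → (∃ m, BIndex L m T) → himpFull L S T = himpPt L S T) ∧
    (∀ n, BIndex L n S → BIndex L n T → BIndex L (n+1) (himpFull L S T)) := by
  constructor
  · rintro ⟨m₁, hbS⟩ ⟨m₂, hbT⟩
    ext u
    constructor
    · intro hu p
      exact hu (u.P.down p) (fun x => x.1) (fun _ _ hh => hh) (val_open _ _)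
    · intro hu Q h hm ho hS'
      have h1 := comp_sim m₁ u Q (u.P.down (h Q.root)) h (fun x => x.1) hm
        (fun _ _ hh => hh) ho (val_open _ _) rfl
      have h2 := comp_sim m₂ u Q (u.P.down (h Q.root)) h (fun x => x.1) hm
        (fun _ _ hh => hh) ho (val_open _ _) rfl
      have hrS : u.restrict (h Q.root) ∈ S := hbS _ hS' _ h1
      have hrT : u.restrict (h Q.root) ∈ T := hu (h Q.root) hrS
      exact hbT _ hrT _ (sim_symm m₂ _ _ h2)
  · intro n hbS hbT u hu v hsv Q h hm ho hS'
    obtain ⟨p, hp⟩ := hsv.2 (h Q.root)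
    have hc := comp_sim n v Q (v.P.down (h Q.root)) h (fun x => x.1) hm
      (fun _ _ hh => hh) ho (val_open _ _) rfl
    have hcs : sim L n (v.comp Q h hm) (u.restrict p) := sim_trans n _ _ _ hc hp
    have huS : u.restrict p ∈ S := hbS _ hS' _ hcs
    have huT : u.restrict p ∈ T :=
      hu (u.P.down p) (fun x => x.1) (fun _ _ hh => hh) (val_open _ _) huS
    exact hbT _ huT _ (sim_symm n _ _ hcs)
end

section
/- For every L-evaluation u : P → L and every n, the following identity of subpresheaves holds: ↓ₙ₊₁u = ⋂ { (↓ₙv) → ⋃_{v ≰ₙ w} (↓ₙw) : v an L-evaluation such that v ≁ₙ u_p for all p ∈ P }, where → is Heyting implication of subpresheaves; moreover all intersections and unions involved are finite (up to repetitions). -/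
variable {L : Type} [PartialOrder L]

/-
The relations `∼ₙ` and `≤ₙ` are the kernel and the pulled-back order of a single map: send an
evaluation to its depth-`n` invariant, namely its root value for `n = 0` and the set of depth-`n`
invariants of its restrictions for `n + 1`. Hence `≤ₙ` is a preorder whose equivalence is `∼ₙ`.
If `x ≤ₙ₊₁ u`, each `x_q` is `∼ₙ` to some `u_p`, and `w := u_p` witnesses the union for every
`v ≥ₙ x_q` that is `∼ₙ` to no `u_p`, since `v ≤ₙ u_p` would force `v ∼ₙ u_p`. Conversely, if some
`x_q` is `∼ₙ` to no `u_p`, then `v := x_q` occurs in the intersection and the implication fails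
at `q`. Finiteness holds because everything involved depends only on invariants, which range
over a finite type when `L` is finite.
-/

def Invariant (L : Type) : ℕ → Type
  | 0 => L
  | n + 1 => Set (Invariant L n)

instance Invariant.finite (L : Type) [Finite L] : ∀ n, Finite (Invariant L n)
  | 0 => ‹Finite L›
  | n + 1 =>
    have := Invariant.finite L n
    inferInstanceAs (Finite (Set (Invariant L n)))

instance Invariant.partialOrder (L : Type) [PartialOrder L] : ∀ n, PartialOrder (Invariant L n)
  | 0 => ‹PartialOrder L›
  | n + 1 => inferInstanceAs (PartialOrder (Set (Invariant L n)))

theorem Function.FactorsThrough.finite_range {α β γ : Type*} [Finite γ] {F : α → β} {g : α → γ}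
    (hF : F.FactorsThrough g) : (Set.range F).Finite := by
  have : Finite (Quotient (Setoid.ker g)) := .of_equiv _ (Setoid.quotientKerEquivRange g).symm
  rw [← Set.range_quotient_lift (s := Setoid.ker g) fun _ _ h => hF h]
  exact Set.finite_range _

namespace Eval

def invariant : (n : ℕ) → Eval L → Invariant L n
  | 0, u => u.rootVal
  | n + 1, u => Set.range fun p => (u.restrict p).invariant n

theorem invariant_succ_le_iff {n : ℕ} {v u : Eval L} :
    v.invariant (n + 1) ≤ u.invariant (n + 1) ↔
      ∀ q, ∃ p, (u.restrict p).invariant n = (v.restrict q).invariant n :=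
  Set.range_subset_iff

end Eval

theorem sim_iff_invariant_eq :
    ∀ (n : ℕ) (u v : Eval L), sim L n u v ↔ u.invariant n = v.invariant n
  | 0, _, _ => Iff.rfl
  | n + 1, u, v => by
    rw [le_antisymm_iff, Eval.invariant_succ_le_iff, Eval.invariant_succ_le_iff]
    simp only [sim, sim_iff_invariant_eq n, eq_comm]

theorem lev_iff_invariant_le (n : ℕ) (v u : Eval L) :
    lev L n v u ↔ v.invariant n ≤ u.invariant n := by
  cases n with
  | zero => exact Iff.rfl
  | succ n => simp only [lev, sim_iff_invariant_eq n, Eval.invariant_succ_le_iff, eq_comm]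

theorem downSet_succ_eq_iInter_himpPt (n : ℕ) (u : Eval L) :
    downSet L (n + 1) u =
      ⋂ v ∈ {v : Eval L | ∀ p, ¬ sim L n (u.restrict p) v},
        himpPt L (downSet L n v) (⋃ w ∈ {w : Eval L | ¬ lev L n v w}, downSet L n w) := by
  ext x
  simp only [downSet, himpPt, Set.mem_ofPred_eq, Set.mem_iInter, Set.mem_iUnion, exists_prop,
    lev_iff_invariant_le, sim_iff_invariant_eq, Eval.invariant_succ_le_iff]
  constructor
  · intro hx v hv q hxv
    obtain ⟨p, hp⟩ := hx q
    exact ⟨u.restrict p, fun hvu => hv p (le_antisymm (hp ▸ hxv) hvu), hp.ge⟩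
  · intro h q
    by_contra! hx
    obtain ⟨w, hxw, hw⟩ := h (x.restrict q) hx q le_rfl
    exact hxw hw

theorem downSet_factorsThrough_invariant (n : ℕ) :
    (downSet L n).FactorsThrough (Eval.invariant n) := by
  intro v v' h
  simp only [downSet, lev_iff_invariant_le, h]

/-- the identity expressing `↓ₙ₊₁u` via Heyting operations on the `↓ₙv`,
together with finiteness (up to repetitions) of the intersections and unions involved. -/
theorem downSet_succ_identity (L : Type) [PartialOrder L] [Finite L]
    (n : ℕ) (u : Eval L) :
    downSet L (n+1) u =
      (⋂ v ∈ {v : Eval L | ∀ p, ¬ sim L n (u.restrict p) v},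
        himpPt L (downSet L n v) (⋃ w ∈ {w : Eval L | ¬ lev L n v w}, downSet L n w)) ∧
    (∀ v : Eval L,
      Set.Finite {A : Set (Eval L) | ∃ w, ¬ lev L n v w ∧ A = downSet L n w}) ∧
    Set.Finite {A : Set (Eval L) | ∃ v : Eval L, (∀ p, ¬ sim L n (u.restrict p) v) ∧
      A = himpPt L (downSet L n v)
            (⋃ w ∈ {w : Eval L | ¬ lev L n v w}, downSet L n w)} := by
  refine ⟨downSet_succ_eq_iInter_himpPt n u, fun v => ?_, ?_⟩
  · refine (downSet_factorsThrough_invariant n).finite_range.subset ?_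
    rintro _ ⟨w, -, rfl⟩
    exact ⟨w, rfl⟩
  · have hF : (fun v => himpPt L (downSet L n v)
        (⋃ w ∈ {w : Eval L | ¬ lev L n v w}, downSet L n w)).FactorsThrough (Eval.invariant n) := by
      intro v v' h
      simp only [downSet_factorsThrough_invariant n h, lev_iff_invariant_le, h]
    refine hF.finite_range.subset ?_
    rintro _ ⟨v, -, rfl⟩
    exact ⟨v, rfl⟩
end
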